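/- arXiv:2206.06995 — 3 statements merged into one kernel-verified Lean document; each statement's English description precedes it below -/
import Mathlib

section
/- Let g : ℝ^{d₁} × ℝ^{d₂} → ℝ be twice continuously differentiable with ∇²_{yy} g(x,y) ⪰ μ_g I and ‖∇²_{xy} g(x,y)‖ ≤ C_{xy} (operator norm) for all (x,y), where μ_g, C_{xy} > 0. Then the map x ↦ y*(x), where y*(x) is the unique minimizer of y ↦ g(x,y), is Lipschitz continuous with Lipschitz constant C_{xy}/μ_g. -/
/-!
Along each slice `x = const`, the bound `∇²_{yy} g ⪰ μ_g I` makes `∇_y g(x, ·)` strongly monotone,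
so if `∇_y g` is `C_{xy}`-Lipschitz in `x`, comparing the optimality conditions
`∇_y g(x₁, y*(x₁)) = 0 = ∇_y g(x₂, y*(x₂))` gives
`μ_g ‖Δy‖² ≤ ⟪∇_y g(x₂, y*(x₂)) - ∇_y g(x₁, y*(x₂)), Δy⟫ ≤ C_{xy} ‖Δx‖ ‖Δy‖`.

The Lipschitz bound on `∇_y g` in `x` comes from the hypothesis on the other mixed derivative
`∇_y ∇_x g` without invoking symmetry of second derivatives: applying the mean value theorem
twice bounds the mixed second difference `g(x₁,y₁) - g(x₁,y₂) - g(x₂,y₁) + g(x₂,y₂)` by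
`C_{xy} ‖x₁ - x₂‖ ‖y₁ - y₂‖`, which is symmetric in the roles of `x` and `y`.
-/

open scoped RealInnerProductSpace

open InnerProductSpace ContinuousLinearMap

section Gradient

variable {F : Type*} [NormedAddCommGroup F] [InnerProductSpace ℝ F] [CompleteSpace F]

lemma IsLocalMin.gradient_eq_zero {f : F → ℝ} {a : F} (h : IsLocalMin f a) :
    gradient f a = 0 := by
  rw [gradient, h.fderiv_eq_zero, map_zero]

lemma ContDiff.differentiable_gradient {f : F → ℝ} (hf : ContDiff ℝ 2 f) :
    Differentiable ℝ (gradient f) :=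
  (toDual ℝ F).symm.differentiable.comp
    ((hf.fderiv_right (m := 1) (by norm_num)).differentiable one_ne_zero)

lemma norm_gradient_sub_gradient (f f' : F → ℝ) (x : F) :
    ‖gradient f x - gradient f' x‖ = ‖fderiv ℝ f x - fderiv ℝ f' x‖ := by
  rw [gradient, gradient, ← map_sub, LinearIsometryEquiv.norm_map]

end Gradient

lemma mul_norm_sub_sq_le_inner_of_fderiv {E : Type*} [NormedAddCommGroup E]
    [InnerProductSpace ℝ E] {F : E → E} {μ : ℝ} (hF : Differentiable ℝ F)
    (hF' : ∀ y v, μ * ‖v‖ ^ 2 ≤ ⟪fderiv ℝ F y v, v⟫) (y₁ y₂ : E) :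
    μ * ‖y₁ - y₂‖ ^ 2 ≤ ⟪F y₁ - F y₂, y₁ - y₂⟫ := by
  set v := y₁ - y₂
  have hq : ∀ t : ℝ, HasDerivAt (fun s : ℝ => ⟪F (y₂ + s • v), v⟫)
      ⟪fderiv ℝ F (y₂ + t • v) v, v⟫ t := by
    intro t
    have hline : HasDerivAt (fun s : ℝ => y₂ + s • v) v t := by
      simpa using ((hasDerivAt_id t).smul_const v).const_add y₂
    simpa using ((hF _).hasFDerivAt.comp_hasDerivAt t hline).inner ℝ (hasDerivAt_const t v)
  obtain ⟨t, -, ht⟩ := exists_hasDerivAt_eq_slope _ _ zero_lt_one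
    (fun s _ => (hq s).continuousAt.continuousWithinAt) (fun s _ => hq s)
  have hv : y₂ + (1 : ℝ) • v = y₁ := by simp [v]
  rw [hv, zero_smul, add_zero, sub_zero, div_one, ← inner_sub_left] at ht
  exact ht ▸ hF' _ v

lemma norm_sub_le_of_strongly_monotone_zeros {P E : Type*} [SeminormedAddCommGroup P]
    [NormedAddCommGroup E] [InnerProductSpace ℝ E] {F : P → E → E} {z : P → E} {μ C : ℝ}
    (hμ : 0 < μ) (hmono : ∀ x y₁ y₂, μ * ‖y₁ - y₂‖ ^ 2 ≤ ⟪F x y₁ - F x y₂, y₁ - y₂⟫)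
    (hlip : ∀ x₁ x₂ y, ‖F x₁ y - F x₂ y‖ ≤ C * ‖x₁ - x₂‖) (hz : ∀ x, F x (z x) = 0)
    (x₁ x₂ : P) :
    ‖z x₁ - z x₂‖ ≤ C / μ * ‖x₁ - x₂‖ := by
  have hC : 0 ≤ C * ‖x₁ - x₂‖ := (norm_nonneg _).trans (hlip x₁ x₂ (z x₂))
  have key : μ * ‖z x₁ - z x₂‖ ^ 2 ≤ C * ‖x₁ - x₂‖ * ‖z x₁ - z x₂‖ :=
    calc μ * ‖z x₁ - z x₂‖ ^ 2 ≤ ⟪F x₁ (z x₁) - F x₁ (z x₂), z x₁ - z x₂⟫ := hmono _ _ _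
      _ = ⟪F x₂ (z x₂) - F x₁ (z x₂), z x₁ - z x₂⟫ := by rw [hz, hz]
      _ ≤ ‖F x₂ (z x₂) - F x₁ (z x₂)‖ * ‖z x₁ - z x₂‖ := real_inner_le_norm _ _
      _ ≤ C * ‖x₁ - x₂‖ * ‖z x₁ - z x₂‖ := by
        gcongr; rw [norm_sub_rev x₁]; exact hlip _ _ _
  rw [div_mul_eq_mul_div, le_div_iff₀ hμ]
  nlinarith [norm_nonneg (z x₁ - z x₂)]

section Product

variable {E₁ E₂ : Type*} [NormedAddCommGroup E₁] [InnerProductSpace ℝ E₁] [CompleteSpace E₁]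
  [NormedAddCommGroup E₂] [InnerProductSpace ℝ E₂] {g : E₁ × E₂ → ℝ}

lemma ContDiff.differentiable_gradient_prodMk_left (hg : ContDiff ℝ 2 g) (x : E₁) :
    Differentiable ℝ fun y => gradient (fun x' => g (x', y)) x := by
  have hrepr : (fun y => gradient (fun x' => g (x', y)) x) =
      fun y => (toDual ℝ E₁).symm ((fderiv ℝ g (x, y)).comp (inl ℝ E₁ E₂)) := by
    funext y
    exact congrArg _ ((hg.differentiable two_ne_zero (x, y)).hasFDerivAt.comp x
      (hasFDerivAt_prodMk_left (𝕜 := ℝ) x y)).fderiv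
  rw [hrepr]
  exact (toDual ℝ E₁).symm.differentiable.comp <|
    (((hg.fderiv_right (m := 1) (by norm_num)).differentiable one_ne_zero).comp
      (differentiable_const x |>.prodMk differentiable_id)).clm_comp (differentiable_const _)

lemma norm_mixed_second_difference_le (hg : ContDiff ℝ 2 g) {C : ℝ}
    (hmixed : ∀ x y, ‖fderiv ℝ (fun y' => gradient (fun x' => g (x', y')) x) y‖ ≤ C)
    (x₁ x₂ : E₁) (y₁ y₂ : E₂) :
    ‖g (x₁, y₁) - g (x₁, y₂) - (g (x₂, y₁) - g (x₂, y₂))‖ ≤ C * ‖y₁ - y₂‖ * ‖x₁ - x₂‖ := by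
  have hslice : ∀ y, Differentiable ℝ fun x => g (x, y) := fun y =>
    (hg.differentiable two_ne_zero).comp (differentiable_id.prodMk (differentiable_const y))
  have hgrad : ∀ x, ‖gradient (fun x' => g (x', y₁)) x - gradient (fun x' => g (x', y₂)) x‖ ≤
      C * ‖y₁ - y₂‖ := fun x =>
    convex_univ.norm_image_sub_le_of_norm_fderiv_le
      (fun y _ => hg.differentiable_gradient_prodMk_left x y) (fun y _ => hmixed x y)
      (Set.mem_univ y₂) (Set.mem_univ y₁)
  refine convex_univ.norm_image_sub_le_of_norm_fderiv_le
    (f := fun x => g (x, y₁) - g (x, y₂)) (fun x _ => ((hslice y₁).sub (hslice y₂)) x)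
    (fun x _ => ?_) (Set.mem_univ x₂) (Set.mem_univ x₁)
  rw [fderiv_fun_sub (hslice y₁ x) (hslice y₂ x), ← norm_gradient_sub_gradient]
  exact hgrad x

variable [CompleteSpace E₂]

lemma norm_gradient_prodMk_right_sub_le (hg : ContDiff ℝ 2 g) {C : ℝ}
    (hmixed : ∀ x y, ‖fderiv ℝ (fun y' => gradient (fun x' => g (x', y')) x) y‖ ≤ C)
    (x₁ x₂ : E₁) (y : E₂) :
    ‖gradient (fun y' => g (x₁, y')) y - gradient (fun y' => g (x₂, y')) y‖ ≤
      C * ‖x₁ - x₂‖ := by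
  have hslice : ∀ x, Differentiable ℝ fun y => g (x, y) := fun x =>
    (hg.differentiable two_ne_zero).comp ((differentiable_const x).prodMk differentiable_id)
  have hC : 0 ≤ C := (norm_nonneg _).trans (hmixed x₁ y)
  rw [norm_gradient_sub_gradient, ← fderiv_fun_sub (hslice x₁ y) (hslice x₂ y)]
  refine norm_fderiv_le_of_lip' ℝ (by positivity) (Filter.Eventually.of_forall fun y' => ?_)
  calc ‖g (x₁, y') - g (x₂, y') - (g (x₁, y) - g (x₂, y))‖
      = ‖g (x₁, y') - g (x₁, y) - (g (x₂, y') - g (x₂, y))‖ := by congr 1; ring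
    _ ≤ C * ‖y' - y‖ * ‖x₁ - x₂‖ := norm_mixed_second_difference_le hg hmixed x₁ x₂ y' y
    _ = C * ‖x₁ - x₂‖ * ‖y' - y‖ := by ring

end Product

theorem inner_solution_lipschitz_general
    {d₁ d₂ : ℕ}
    (g : EuclideanSpace ℝ (Fin d₁) × EuclideanSpace ℝ (Fin d₂) → ℝ)
    (μg Cxy : ℝ) (hμg : 0 < μg)
    (hg_smooth : ContDiff ℝ 2 g)
    -- the gradients of `g` in `y` and in `x`
    (gradYg : EuclideanSpace ℝ (Fin d₁) → EuclideanSpace ℝ (Fin d₂) → EuclideanSpace ℝ (Fin d₂))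
    (hgradYg : ∀ x y, gradYg x y = gradient (fun y' => g (x, y')) y)
    (gradXg : EuclideanSpace ℝ (Fin d₁) → EuclideanSpace ℝ (Fin d₂) → EuclideanSpace ℝ (Fin d₁))
    (hgradXg : ∀ x y, gradXg x y = gradient (fun x' => g (x', y)) x)
    (hg_hess : ∀ x y (v : EuclideanSpace ℝ (Fin d₂)),
      μg * ‖v‖ ^ 2 ≤ ⟪fderiv ℝ (gradYg x) y v, v⟫)
    -- `‖∇²_{xy} g(x,y)‖ ≤ C_{xy}` in operator norm
    (hg_mixed : ∀ x y, ‖fderiv ℝ (fun y' => gradXg x y') y‖ ≤ Cxy)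
    -- `y*` is the (unique) minimizer of `y ↦ g (x, y)` for every `x`
    (ystar : EuclideanSpace ℝ (Fin d₁) → EuclideanSpace ℝ (Fin d₂))
    (hystar : ∀ x y, g (x, ystar x) ≤ g (x, y)) :
    ∀ x₁ x₂, ‖ystar x₁ - ystar x₂‖ ≤ (Cxy / μg) * ‖x₁ - x₂‖ := by
  obtain rfl : gradYg = fun x y => gradient (fun y' => g (x, y')) y := funext₂ hgradYg
  obtain rfl : gradXg = fun x y => gradient (fun x' => g (x', y)) x := funext₂ hgradXg
  refine norm_sub_le_of_strongly_monotone_zeros (F := fun x => gradient fun y => g (x, y)) hμg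
    (fun x => ?_) (norm_gradient_prodMk_right_sub_le hg_smooth hg_mixed) (fun x => ?_)
  · exact mul_norm_sub_sq_le_inner_of_fderiv
      (hg_smooth.comp (contDiff_prodMk_right x)).differentiable_gradient (hg_hess x)
  · exact IsLocalMin.gradient_eq_zero (Filter.Eventually.of_forall (hystar x))

/-- For `g` twice continuously differentiable with `∇²_{yy} g(x,y) ⪰ μ_g I`
and `‖∇²_{xy} g(x,y)‖ ≤ C_{xy}` (operator norm) everywhere, the inner solution map
`x ↦ y*(x)` is Lipschitz continuous with constant `C_{xy}/μ_g`. -/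
theorem inner_solution_lipschitz
    {d₁ d₂ : ℕ}
    (g : EuclideanSpace ℝ (Fin d₁) × EuclideanSpace ℝ (Fin d₂) → ℝ)
    (μg Cxy : ℝ) (hμg : 0 < μg) (hCxy : 0 < Cxy)
    (hg_smooth : ContDiff ℝ 2 g)
    -- the gradients of `g` in `y` and in `x`
    (gradYg : EuclideanSpace ℝ (Fin d₁) → EuclideanSpace ℝ (Fin d₂) → EuclideanSpace ℝ (Fin d₂))
    (hgradYg : ∀ x y, gradYg x y = gradient (fun y' => g (x, y')) y)
    (gradXg : EuclideanSpace ℝ (Fin d₁) → EuclideanSpace ℝ (Fin d₂) → EuclideanSpace ℝ (Fin d₁))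
    (hgradXg : ∀ x y, gradXg x y = gradient (fun x' => g (x', y)) x)
    (hg_hess : ∀ x y (v : EuclideanSpace ℝ (Fin d₂)),
      μg * ‖v‖ ^ 2 ≤ ⟪fderiv ℝ (gradYg x) y v, v⟫)
    -- `‖∇²_{xy} g(x,y)‖ ≤ C_{xy}` in operator norm
    (hg_mixed : ∀ x y, ‖fderiv ℝ (fun y' => gradXg x y') y‖ ≤ Cxy)
    -- `y*` is the (unique) minimizer of `y ↦ g (x, y)` for every `x`
    (ystar : EuclideanSpace ℝ (Fin d₁) → EuclideanSpace ℝ (Fin d₂))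
    (hystar : ∀ x y, g (x, ystar x) ≤ g (x, y)) :
    ∀ x₁ x₂, ‖ystar x₁ - ystar x₂‖ ≤ (Cxy / μg) * ‖x₁ - x₂‖ :=
  inner_solution_lipschitz_general g μg Cxy hμg hg_smooth gradYg hgradYg gradXg hgradXg hg_hess
    hg_mixed ystar hystar
end

section
/- Let f : ℝ^{d₁} × ℝ^{d₂} → ℝ and g : ℝ^{d₁} × ℝ^{d₂} → ℝ satisfy: ∇_x f(x,·) and ∇_y f(x,·) are Lipschitz in y with constant L_f, and ‖∇_y f(x,y)‖ ≤ C_f for all (x,y); g is twice continuously differentiable with ∇²_{yy} g(x,y) ⪰ μ_g I, ‖∇²_{xy} g(x,y)‖ ≤ C_g, and ∇²_{xy} g(x,·), ∇²_{yy} g(x,·) Lipschitz in y with constant L_g, for all (x,y). Then there exists a constant L > 0, depending only on L_f, C_f, μ_g, C_g, L_g, such that for all x ∈ ℝ^{d₁} and all y₁, y₂ ∈ ℝ^{d₂}, ‖\bar∇_x f(x,y₁) − \bar∇_x f(x,y₂)‖ ≤ L ‖y₁ − y₂‖. -/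
/-! Coercivity `μ_g‖v‖² ≤ ⟪∇²_{yy} g v, v⟫` makes the Hessian invertible with inverse of norm at
most `1/μ_g`, and the resolvent identity `H₁⁻¹ - H₂⁻¹ = H₁⁻¹ (H₂ - H₁) H₂⁻¹` then makes
`y ↦ [∇²_{yy} g(x,y)]⁻¹` Lipschitz with constant `L_g/μ_g²`. The correction term of the
hypergradient is a composition of bounded Lipschitz factors, and
`‖A u - B w‖ ≤ ‖A - B‖ ‖u‖ + ‖B‖ ‖u - w‖` propagates the constants through it. -/

open scoped RealInnerProductSpace Ring

theorem norm_inverse_sub_inverse_le {R : Type*} [NormedRing R] {a b : R}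
    (h : IsUnit a ↔ IsUnit b) : ‖a⁻¹ʳ - b⁻¹ʳ‖ ≤ ‖a⁻¹ʳ‖ * ‖b - a‖ * ‖b⁻¹ʳ‖ :=
  Ring.inverse_sub_inverse h ▸ norm_mul₃_le

section Coercive

variable {E : Type*} [NormedAddCommGroup E] [InnerProductSpace ℝ E] {T : E →L[ℝ] E} {μ : ℝ}

theorem mul_norm_le_norm_apply_of_coercive (hT : ∀ v, μ * ‖v‖ ^ 2 ≤ ⟪T v, v⟫) (v : E) :
    μ * ‖v‖ ≤ ‖T v‖ := by
  rcases (norm_nonneg v).eq_or_lt with hv | hv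
  · simp [← hv]
  · refine le_of_mul_le_mul_right ?_ hv
    calc μ * ‖v‖ * ‖v‖ = μ * ‖v‖ ^ 2 := by ring
      _ ≤ ⟪T v, v⟫ := hT v
      _ ≤ ‖T v‖ * ‖v‖ := real_inner_le_norm _ _

variable [CompleteSpace E]

theorem isUnit_of_coercive (hμ : 0 < μ) (hT : ∀ v, μ * ‖v‖ ^ 2 ≤ ⟪T v, v⟫) : IsUnit T :=
  T.isUnit_of_forall_le_norm_inner_map (c := ⟨μ, hμ.le⟩) hμ fun v =>
    (mul_comm (‖v‖ ^ 2) μ ▸ hT v).trans (Real.le_norm_self _)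

theorem norm_inverse_le_of_coercive (hμ : 0 < μ) (hT : ∀ v, μ * ‖v‖ ^ 2 ≤ ⟪T v, v⟫) :
    ‖T⁻¹ʳ‖ ≤ μ⁻¹ := by
  refine T⁻¹ʳ.opNorm_le_bound (by positivity) fun w => ?_
  have hw : T (T⁻¹ʳ w) = w :=
    DFunLike.congr_fun (Ring.mul_inverse_cancel T (isUnit_of_coercive hμ hT)) w
  rw [inv_mul_eq_div, le_div_iff₀' hμ]
  simpa only [hw] using mul_norm_le_norm_apply_of_coercive hT (T⁻¹ʳ w)

theorem norm_inverse_sub_inverse_le_of_coercive {S : E →L[ℝ] E} (hμ : 0 < μ)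
    (hT : ∀ v, μ * ‖v‖ ^ 2 ≤ ⟪T v, v⟫) (hS : ∀ v, μ * ‖v‖ ^ 2 ≤ ⟪S v, v⟫) :
    ‖T⁻¹ʳ - S⁻¹ʳ‖ ≤ μ⁻¹ * ‖T - S‖ * μ⁻¹ := by
  refine (norm_inverse_sub_inverse_le
    (iff_of_true (isUnit_of_coercive hμ hT) (isUnit_of_coercive hμ hS))).trans ?_
  rw [norm_sub_rev S]
  gcongr
  exacts [norm_inverse_le_of_coercive hμ hT, norm_inverse_le_of_coercive hμ hS]

end Coercive

theorem ContinuousLinearMap.norm_apply_sub_apply_le {𝕜 E F : Type*} [NontriviallyNormedField 𝕜]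
    [SeminormedAddCommGroup E] [SeminormedAddCommGroup F] [NormedSpace 𝕜 E] [NormedSpace 𝕜 F]
    (A B : E →L[𝕜] F) (u w : E) : ‖A u - B w‖ ≤ ‖A - B‖ * ‖u‖ + ‖B‖ * ‖u - w‖ :=
  calc ‖A u - B w‖ = ‖(A - B) u + B (u - w)‖ := by simp
    _ ≤ ‖A - B‖ * ‖u‖ + ‖B‖ * ‖u - w‖ :=
      (norm_add_le _ _).trans (add_le_add ((A - B).le_opNorm u) (B.le_opNorm _))

theorem hypergradient_lipschitz_in_y_general
    {d₁ d₂ : ℕ}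
    (Lf Cf μg Cg Lg : ℝ) (hLf : 0 < Lf) (hCf : 0 < Cf)
    (hμg : 0 < μg) (hCg : 0 < Cg) (hLg : 0 < Lg)
    -- the gradients of `f` in `x`, `f` in `y`, `g` in `x` and `g` in `y`
    (gradXf : EuclideanSpace ℝ (Fin d₁) → EuclideanSpace ℝ (Fin d₂) → EuclideanSpace ℝ (Fin d₁))
    (gradYf : EuclideanSpace ℝ (Fin d₁) → EuclideanSpace ℝ (Fin d₂) → EuclideanSpace ℝ (Fin d₂))
    (gradXg : EuclideanSpace ℝ (Fin d₁) → EuclideanSpace ℝ (Fin d₂) → EuclideanSpace ℝ (Fin d₁))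
    (gradYg : EuclideanSpace ℝ (Fin d₁) → EuclideanSpace ℝ (Fin d₂) → EuclideanSpace ℝ (Fin d₂))
    -- Assumption 2: `∇ₓ f(x,·)` and `∇_y f(x,·)` are `L_f`-Lipschitz in `y`,
    -- and `‖∇_y f(x,y)‖ ≤ C_f`
    (hf_lipx : ∀ x y₁ y₂, ‖gradXf x y₁ - gradXf x y₂‖ ≤ Lf * ‖y₁ - y₂‖)
    (hf_lipy : ∀ x y₁ y₂, ‖gradYf x y₁ - gradYf x y₂‖ ≤ Lf * ‖y₁ - y₂‖)
    (hf_bound : ∀ x y, ‖gradYf x y‖ ≤ Cf)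
    -- Assumption 3: `g` is `C²`, `∇²_{yy} g ⪰ μ_g I`, `‖∇²_{xy} g‖ ≤ C_g`, and
    -- `∇²_{xy} g(x,·)`, `∇²_{yy} g(x,·)` are `L_g`-Lipschitz in `y`
    (hg_hess : ∀ x y (v : EuclideanSpace ℝ (Fin d₂)),
      μg * ‖v‖ ^ 2 ≤ ⟪fderiv ℝ (gradYg x) y v, v⟫)
    (hg_mixed_bound : ∀ x y, ‖fderiv ℝ (fun y' => gradXg x y') y‖ ≤ Cg)
    (hg_mixed_lip : ∀ x y₁ y₂,
      ‖fderiv ℝ (fun y' => gradXg x y') y₁ - fderiv ℝ (fun y' => gradXg x y') y₂‖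
        ≤ Lg * ‖y₁ - y₂‖)
    (hg_hess_lip : ∀ x y₁ y₂,
      ‖fderiv ℝ (gradYg x) y₁ - fderiv ℝ (gradYg x) y₂‖ ≤ Lg * ‖y₁ - y₂‖)
    -- the hypergradient `∇̄ₓ f`
    (barf : EuclideanSpace ℝ (Fin d₁) → EuclideanSpace ℝ (Fin d₂) → EuclideanSpace ℝ (Fin d₁))
    (hbarf : ∀ x y, barf x y =
      gradXf x y -
        (fderiv ℝ (fun y' => gradXg x y') y)
          ((Ring.inverse (fderiv ℝ (gradYg x) y)) (gradYf x y))) :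
    ∃ L > 0, ∀ x y₁ y₂, ‖barf x y₁ - barf x y₂‖ ≤ L * ‖y₁ - y₂‖ := by
  refine ⟨Lf + Lg * Cf / μg + Cg * Cf * Lg / μg ^ 2 + Cg * Lf / μg, by positivity,
    fun x y₁ y₂ => ?_⟩
  set H := fderiv ℝ (gradYg x)
  set M := fderiv ℝ (fun y' => gradXg x y')
  set d := ‖y₁ - y₂‖
  have hHinv : ∀ y, ‖(H y)⁻¹ʳ‖ ≤ μg⁻¹ := fun y => norm_inverse_le_of_coercive hμg (hg_hess x y)
  have hHinv_sub : ‖(H y₁)⁻¹ʳ - (H y₂)⁻¹ʳ‖ ≤ μg⁻¹ * (Lg * d) * μg⁻¹ :=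
    (norm_inverse_sub_inverse_le_of_coercive hμg (hg_hess x y₁) (hg_hess x y₂)).trans
      (by gcongr; exact hg_hess_lip x y₁ y₂)
  have hsolve_bound : ‖(H y₁)⁻¹ʳ (gradYf x y₁)‖ ≤ μg⁻¹ * Cf :=
    ((H y₁)⁻¹ʳ.le_opNorm _).trans (by gcongr; exacts [hHinv y₁, hf_bound x y₁])
  have hsolve_sub : ‖(H y₁)⁻¹ʳ (gradYf x y₁) - (H y₂)⁻¹ʳ (gradYf x y₂)‖
      ≤ μg⁻¹ * (Lg * d) * μg⁻¹ * Cf + μg⁻¹ * (Lf * d) :=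
    (ContinuousLinearMap.norm_apply_sub_apply_le _ _ _ _).trans
      (by gcongr; exacts [hf_bound x y₁, hHinv y₂, hf_lipy x y₁ y₂])
  have hcorr_sub : ‖M y₁ ((H y₁)⁻¹ʳ (gradYf x y₁)) - M y₂ ((H y₂)⁻¹ʳ (gradYf x y₂))‖
      ≤ Lg * d * (μg⁻¹ * Cf) + Cg * (μg⁻¹ * (Lg * d) * μg⁻¹ * Cf + μg⁻¹ * (Lf * d)) :=
    (ContinuousLinearMap.norm_apply_sub_apply_le _ _ _ _).trans
      (by gcongr; exacts [hg_mixed_lip x y₁ y₂, hg_mixed_bound x y₂])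
  calc ‖barf x y₁ - barf x y₂‖
      ≤ ‖gradXf x y₁ - gradXf x y₂‖
        + ‖M y₁ ((H y₁)⁻¹ʳ (gradYf x y₁)) - M y₂ ((H y₂)⁻¹ʳ (gradYf x y₂))‖ := by
        rw [hbarf, hbarf, sub_sub_sub_comm]
        exact norm_sub_le _ _
    _ ≤ Lf * d + (Lg * d * (μg⁻¹ * Cf)
          + Cg * (μg⁻¹ * (Lg * d) * μg⁻¹ * Cf + μg⁻¹ * (Lf * d))) :=
        add_le_add (hf_lipx x y₁ y₂) hcorr_sub
    _ = (Lf + Lg * Cf / μg + Cg * Cf * Lg / μg ^ 2 + Cg * Lf / μg) * d := by ring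

/-- Under Lipschitz/boundedness assumptions on the gradients of `f` and on the
second derivatives of `g` (Assumptions 2 and 3 of the paper), the hypergradient
`∇̄ₓ f(x,y) = ∇ₓ f(x,y) − ∇²_{xy} g(x,y) [∇²_{yy} g(x,y)]⁻¹ ∇_y f(x,y)`
is Lipschitz continuous in the inner variable `y`, uniformly in `x`. -/
theorem hypergradient_lipschitz_in_y
    {d₁ d₂ : ℕ}
    (f g : EuclideanSpace ℝ (Fin d₁) × EuclideanSpace ℝ (Fin d₂) → ℝ)
    (Lf Cf μg Cg Lg : ℝ) (hLf : 0 < Lf) (hCf : 0 < Cf)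
    (hμg : 0 < μg) (hCg : 0 < Cg) (hLg : 0 < Lg)
    -- the gradients of `f` in `x`, `f` in `y`, `g` in `x` and `g` in `y`
    (gradXf : EuclideanSpace ℝ (Fin d₁) → EuclideanSpace ℝ (Fin d₂) → EuclideanSpace ℝ (Fin d₁))
    (hgradXf : ∀ x y, gradXf x y = gradient (fun x' => f (x', y)) x)
    (gradYf : EuclideanSpace ℝ (Fin d₁) → EuclideanSpace ℝ (Fin d₂) → EuclideanSpace ℝ (Fin d₂))
    (hgradYf : ∀ x y, gradYf x y = gradient (fun y' => f (x, y')) y)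
    (gradXg : EuclideanSpace ℝ (Fin d₁) → EuclideanSpace ℝ (Fin d₂) → EuclideanSpace ℝ (Fin d₁))
    (hgradXg : ∀ x y, gradXg x y = gradient (fun x' => g (x', y)) x)
    (gradYg : EuclideanSpace ℝ (Fin d₁) → EuclideanSpace ℝ (Fin d₂) → EuclideanSpace ℝ (Fin d₂))
    (hgradYg : ∀ x y, gradYg x y = gradient (fun y' => g (x, y')) y)
    -- Assumption 2: `∇ₓ f(x,·)` and `∇_y f(x,·)` are `L_f`-Lipschitz in `y`,
    -- and `‖∇_y f(x,y)‖ ≤ C_f`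
    (hf_lipx : ∀ x y₁ y₂, ‖gradXf x y₁ - gradXf x y₂‖ ≤ Lf * ‖y₁ - y₂‖)
    (hf_lipy : ∀ x y₁ y₂, ‖gradYf x y₁ - gradYf x y₂‖ ≤ Lf * ‖y₁ - y₂‖)
    (hf_bound : ∀ x y, ‖gradYf x y‖ ≤ Cf)
    -- Assumption 3: `g` is `C²`, `∇²_{yy} g ⪰ μ_g I`, `‖∇²_{xy} g‖ ≤ C_g`, and
    -- `∇²_{xy} g(x,·)`, `∇²_{yy} g(x,·)` are `L_g`-Lipschitz in `y`
    (hg_smooth : ContDiff ℝ 2 g)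
    (hg_hess : ∀ x y (v : EuclideanSpace ℝ (Fin d₂)),
      μg * ‖v‖ ^ 2 ≤ ⟪fderiv ℝ (gradYg x) y v, v⟫)
    (hg_mixed_bound : ∀ x y, ‖fderiv ℝ (fun y' => gradXg x y') y‖ ≤ Cg)
    (hg_mixed_lip : ∀ x y₁ y₂,
      ‖fderiv ℝ (fun y' => gradXg x y') y₁ - fderiv ℝ (fun y' => gradXg x y') y₂‖
        ≤ Lg * ‖y₁ - y₂‖)
    (hg_hess_lip : ∀ x y₁ y₂,
      ‖fderiv ℝ (gradYg x) y₁ - fderiv ℝ (gradYg x) y₂‖ ≤ Lg * ‖y₁ - y₂‖)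
    -- the hypergradient `∇̄ₓ f`
    (barf : EuclideanSpace ℝ (Fin d₁) → EuclideanSpace ℝ (Fin d₂) → EuclideanSpace ℝ (Fin d₁))
    (hbarf : ∀ x y, barf x y =
      gradXf x y -
        (fderiv ℝ (fun y' => gradXg x y') y)
          ((Ring.inverse (fderiv ℝ (gradYg x) y)) (gradYf x y))) :
    ∃ L > 0, ∀ x y₁ y₂, ‖barf x y₁ - barf x y₂‖ ≤ L * ‖y₁ - y₂‖ :=
  hypergradient_lipschitz_in_y_general Lf Cf μg Cg Lg hLf hCf hμg hCg hLg gradXf gradYf gradXg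
    gradYg hf_lipx hf_lipy hf_bound hg_hess hg_mixed_bound hg_mixed_lip hg_hess_lip barf hbarf
end

section
/- Let f : ℝ^{d₁} × ℝ^{d₂} → ℝ be twice continuously differentiable and let g : ℝ^{d₁} × ℝ^{d₂} → ℝ be three times continuously differentiable with ∇²_{yy} g(x,y) ⪰ μ_g I for all (x,y), where μ_g > 0. Let y*(x) be the unique minimizer of y ↦ g(x,y) and Φ(x) = f(x, y*(x)). Then Φ is twice differentiable and ∇²Φ(x) = ∇_x[\bar∇_x f](x, y*(x)) + ∇_y[\bar∇_x f](x, y*(x)) · D y*(x), where D y*(x) = −[∇²_{yy} g(x, y*(x))]^{-1} ∇²_{yx} g(x, y*(x)). -/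
open scoped RealInnerProductSpace

open ContinuousLinearMap InnerProductSpace Function

/-!
The Hessian of `y ↦ g (x, y)` is coercive, hence invertible (Lax–Milgram), and `y ↦ ∇ᵧ g (x, y)`
is strongly monotone, hence injective. The implicit function theorem applied to
`∇ᵧ g (x, y) = 0` therefore gives a local solution that must coincide with `y*`, so `y*` is
differentiable with `D y* = −[∇²ᵧᵧ g]⁻¹ ∇²ᵧₓ g`. The chain rule gives
`∇Φ = ∇ₓ f + (D y*)† ∇ᵧ f`, and symmetry of `∇² g` turns `(D y*)†` into `−∇²ₓᵧ g [∇²ᵧᵧ g]⁻¹`,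
so `∇Φ x = ∇̄ₓ f (x, y* x)`. Differentiating this along the graph of `y*` gives the Hessian.
-/

section Coercive

variable {F : Type*} [NormedAddCommGroup F] [InnerProductSpace ℝ F]

theorem ContinuousLinearMap.isInvertible_of_coercive [CompleteSpace F] {A : F →L[ℝ] F} {μ : ℝ}
    (hμ : 0 < μ) (hA : ∀ v, μ * ‖v‖ ^ 2 ≤ ⟪A v, v⟫) : A.IsInvertible := by
  let B : F →L[ℝ] F →L[ℝ] ℝ := innerSL ℝ ∘L A
  have hB : IsCoercive B := ⟨μ, hμ, fun v => by rw [mul_assoc, ← sq]; exact hA v⟩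
  exact ⟨hB.continuousLinearEquivOfBilin,
    ext fun v => ext_inner_right ℝ (hB.continuousLinearEquivOfBilin_apply v)⟩

theorem ContinuousLinearMap.IsInvertible.isUnit {R M : Type*} [Semiring R] [TopologicalSpace M]
    [AddCommMonoid M] [Module R M] {A : M →L[R] M} (hA : A.IsInvertible) : IsUnit A := by
  obtain ⟨e, rfl⟩ := hA
  exact ⟨e.toUnit, rfl⟩

theorem strongMonotone_of_fderiv_coercive {G : F → F} {μ : ℝ} (hG : Differentiable ℝ G)
    (hcoer : ∀ y v, μ * ‖v‖ ^ 2 ≤ ⟪fderiv ℝ G y v, v⟫) (y₁ y₂ : F) :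
    μ * ‖y₁ - y₂‖ ^ 2 ≤ ⟪G y₁ - G y₂, y₁ - y₂⟫ := by
  set v := y₁ - y₂
  let φ : ℝ → ℝ := fun t => ⟪G (y₂ + t • v), v⟫
  have hφ : ∀ t, HasDerivAt φ ⟪fderiv ℝ G (y₂ + t • v) v, v⟫ t := fun t => by
    have hline : HasDerivAt (fun t : ℝ => y₂ + t • v) v t := by
      simpa using ((hasDerivAt_id t).smul_const v).const_add y₂
    simpa using ((hG _).hasFDerivAt.comp_hasDerivAt t hline).inner ℝ (hasDerivAt_const t v)
  obtain ⟨c, -, hc⟩ := exists_hasDerivAt_eq_slope φ _ zero_lt_one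
    (fun t _ => (hφ t).continuousAt.continuousWithinAt) (fun t _ => hφ t)
  calc μ * ‖v‖ ^ 2 ≤ ⟪fderiv ℝ G (y₂ + c • v) v, v⟫ := hcoer _ v
    _ = ⟪G y₁ - G y₂, v⟫ := by rw [hc]; simp [φ, v, inner_sub_left]

theorem injective_of_fderiv_coercive {G : F → F} {μ : ℝ} (hμ : 0 < μ) (hG : Differentiable ℝ G)
    (hcoer : ∀ y v, μ * ‖v‖ ^ 2 ≤ ⟪fderiv ℝ G y v, v⟫) : Injective G := by
  intro y₁ y₂ h
  have := strongMonotone_of_fderiv_coercive hG hcoer y₁ y₂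
  rw [h, sub_self, inner_zero_left] at this
  have : ‖y₁ - y₂‖ ^ 2 ≤ 0 := by nlinarith
  simpa [sub_eq_zero] using this

end Coercive

section Implicit

variable {𝕜 : Type*} [NontriviallyNormedField 𝕜]
  {E : Type*} [NormedAddCommGroup E] [NormedSpace 𝕜 E] [CompleteSpace E]
  {F : Type*} [NormedAddCommGroup F] [NormedSpace 𝕜 F] [CompleteSpace F]
  {H : Type*} [NormedAddCommGroup H] [NormedSpace 𝕜 H] [CompleteSpace H]

theorem HasStrictFDerivAt.hasFDerivAt_of_apply_eq_zero {G : E × F → H} {G' : E × F →L[𝕜] H}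
    {y : E → F} {x : E} (hG : HasStrictFDerivAt G G' (x, y x))
    (hG' : (G' ∘L inr 𝕜 E F).IsInvertible)
    (hy : ∀ x, G (x, y x) = 0) (hinj : ∀ x, Injective fun y => G (x, y)) :
    HasFDerivAt y (-(G' ∘L inr 𝕜 E F).inverse ∘L (G' ∘L inl 𝕜 E F)) x := by
  have hψ := hG.hasStrictFDerivAt_implicitFunctionOfProdDomain hG'
  refine hψ.hasFDerivAt.congr_of_eventuallyEq ?_
  filter_upwards [hG.eventually_apply_implicitFunctionOfProdDomain hG'] with x' hx'
  exact hinj x' (show G (x', y x') = G (x', _) by rw [hy, hx', hy])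

end Implicit

section Partial

variable {𝕜 : Type*} [NontriviallyNormedField 𝕜]
  {E : Type*} [NormedAddCommGroup E] [NormedSpace 𝕜 E]
  {F : Type*} [NormedAddCommGroup F] [NormedSpace 𝕜 F]
  {G : Type*} [NormedAddCommGroup G] [NormedSpace 𝕜 G]
  {h : E → F → G} {x : E} {y : F}

theorem DifferentiableAt.fderiv_partial_fst (hh : DifferentiableAt 𝕜 (uncurry h) (x, y)) :
    fderiv 𝕜 (fun x' => h x' y) x = fderiv 𝕜 (uncurry h) (x, y) ∘L inl 𝕜 E F := by
  have := hh.hasFDerivAt.comp x (hasFDerivAt_prodMk_left (𝕜 := 𝕜) x y)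
  exact this.fderiv

theorem DifferentiableAt.fderiv_partial_snd (hh : DifferentiableAt 𝕜 (uncurry h) (x, y)) :
    fderiv 𝕜 (h x) y = fderiv 𝕜 (uncurry h) (x, y) ∘L inr 𝕜 E F := by
  have := hh.hasFDerivAt.comp y (hasFDerivAt_prodMk_right (𝕜 := 𝕜) x y)
  exact this.fderiv

theorem DifferentiableAt.fderiv_comp_graph {φ : E → F} {φ' : E →L[𝕜] F}
    (hh : DifferentiableAt 𝕜 (uncurry h) (x, φ x)) (hφ : HasFDerivAt φ φ' x) :
    fderiv 𝕜 (fun x' => h x' (φ x')) x =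
      fderiv 𝕜 (fun x' => h x' (φ x)) x + fderiv 𝕜 (h x) (φ x) ∘L φ' := by
  have hcomp := HasFDerivAt.comp (f := fun x' => (x', φ x')) x hh.hasFDerivAt
    ((hasFDerivAt_id x).prodMk hφ)
  rw [show (fun x' => h x' (φ x')) = uncurry h ∘ fun x' => (x', φ x') from rfl, hcomp.fderiv,
    hh.fderiv_partial_fst, hh.fderiv_partial_snd]
  ext1 u
  simp only [coe_comp, comp_apply, add_apply, inl_apply, inr_apply, ← map_add, Prod.mk_add_mk,
    add_zero, zero_add]
  rfl

theorem ContDiff.differentiable_fderiv_partial_snd (hh : ContDiff 𝕜 2 (uncurry h)) :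
    Differentiable 𝕜 fun p : E × F => fderiv 𝕜 (h p.1) p.2 := by
  have hpartial : (fun p : E × F => fderiv 𝕜 (h p.1) p.2) =
      fun p => fderiv 𝕜 (uncurry h) p ∘L inr 𝕜 E F :=
    funext fun p => (hh.differentiable two_ne_zero p).fderiv_partial_snd
  rw [hpartial]
  exact ((hh.fderiv_right (m := 1) le_rfl).differentiable one_ne_zero).clm_comp
    (differentiable_const _)

end Partial

noncomputable def gradFst {E F : Type*} [NormedAddCommGroup E] [InnerProductSpace ℝ E]
    [CompleteSpace E] (h : E × F → ℝ) (x : E) (y : F) : E :=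
  gradient (fun x' => h (x', y)) x

noncomputable def gradSnd {E F : Type*} [NormedAddCommGroup F] [InnerProductSpace ℝ F]
    [CompleteSpace F] (h : E × F → ℝ) (x : E) (y : F) : F :=
  gradient (fun y' => h (x, y')) y

section GradFst

variable {E F : Type*} [NormedAddCommGroup E] [InnerProductSpace ℝ E] [CompleteSpace E]
  [NormedAddCommGroup F] [NormedSpace ℝ F]

noncomputable def rieszFst : (E × F →L[ℝ] ℝ) →L[ℝ] E :=
  (toDual ℝ E).symm.toContinuousLinearEquiv.toContinuousLinearMap ∘L
    (compL ℝ E (E × F) ℝ).flip (inl ℝ E F)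

theorem inner_rieszFst (L : E × F →L[ℝ] ℝ) (u : E) : ⟪rieszFst L, u⟫ = L (u, 0) :=
  toDual_symm_apply

theorem uncurry_gradFst {h : E × F → ℝ} (hh : Differentiable ℝ h) :
    uncurry (gradFst h) = rieszFst ∘ fderiv ℝ h := by
  ext1 ⟨x, y⟩
  refine ext_inner_right ℝ fun u => ?_
  have hpartial : fderiv ℝ (fun x' => h (x', y)) x = fderiv ℝ h (x, y) ∘L inl ℝ E F :=
    (hh (x, y)).fderiv_partial_fst (h := curry h)
  simp [gradFst, inner_gradient_left, hpartial, inner_rieszFst]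

theorem contDiff_uncurry_gradFst {h : E × F → ℝ} {m n : WithTop ℕ∞} (hh : ContDiff ℝ n h)
    (hmn : m + 1 ≤ n) : ContDiff ℝ m (uncurry (gradFst h)) := by
  rw [uncurry_gradFst ((hh.of_le (le_trans le_add_self hmn)).differentiable one_ne_zero)]
  exact rieszFst.contDiff.comp (hh.fderiv_right hmn)

theorem inner_fderiv_uncurry_gradFst {h : E × F → ℝ} (hh : ContDiff ℝ 2 h) (p v : E × F) (u : E) :
    ⟪fderiv ℝ (uncurry (gradFst h)) p v, u⟫ = fderiv ℝ (fderiv ℝ h) p v (u, 0) := by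
  have hG : DifferentiableAt ℝ (uncurry (gradFst h)) p :=
    (contDiff_uncurry_gradFst hh (m := 1) le_rfl).differentiable one_ne_zero p
  have hD : DifferentiableAt ℝ (fderiv ℝ h) p :=
    (hh.fderiv_right (m := 1) le_rfl).differentiable one_ne_zero p
  have hinner : (fun q => ⟪uncurry (gradFst h) q, u⟫) = fun q => fderiv ℝ h q (u, 0) := by
    rw [uncurry_gradFst (hh.differentiable two_ne_zero)]
    exact funext fun q => inner_rieszFst _ _
  have hL := hG.hasFDerivAt.inner ℝ (hasFDerivAt_const u p)
  rw [hinner] at hL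
  simpa using congrArg (· v) (hL.unique (hD.hasFDerivAt.clm_apply (hasFDerivAt_const (u, 0) p)))

end GradFst

section GradSnd

variable {E F : Type*} [NormedAddCommGroup E] [NormedSpace ℝ E]
  [NormedAddCommGroup F] [InnerProductSpace ℝ F] [CompleteSpace F]

noncomputable def rieszSnd : (E × F →L[ℝ] ℝ) →L[ℝ] F :=
  (toDual ℝ F).symm.toContinuousLinearEquiv.toContinuousLinearMap ∘L
    (compL ℝ F (E × F) ℝ).flip (inr ℝ E F)

theorem inner_rieszSnd (L : E × F →L[ℝ] ℝ) (w : F) : ⟪rieszSnd L, w⟫ = L (0, w) :=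
  toDual_symm_apply

theorem uncurry_gradSnd {h : E × F → ℝ} (hh : Differentiable ℝ h) :
    uncurry (gradSnd h) = rieszSnd ∘ fderiv ℝ h := by
  ext1 ⟨x, y⟩
  refine ext_inner_right ℝ fun w => ?_
  have hpartial : fderiv ℝ (fun y' => h (x, y')) y = fderiv ℝ h (x, y) ∘L inr ℝ E F :=
    (hh (x, y)).fderiv_partial_snd (h := curry h)
  simp [gradSnd, inner_gradient_left, hpartial, inner_rieszSnd]

theorem contDiff_uncurry_gradSnd {h : E × F → ℝ} {m n : WithTop ℕ∞} (hh : ContDiff ℝ n h)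
    (hmn : m + 1 ≤ n) : ContDiff ℝ m (uncurry (gradSnd h)) := by
  rw [uncurry_gradSnd ((hh.of_le (le_trans le_add_self hmn)).differentiable one_ne_zero)]
  exact rieszSnd.contDiff.comp (hh.fderiv_right hmn)

theorem inner_fderiv_uncurry_gradSnd {h : E × F → ℝ} (hh : ContDiff ℝ 2 h) (p v : E × F) (w : F) :
    ⟪fderiv ℝ (uncurry (gradSnd h)) p v, w⟫ = fderiv ℝ (fderiv ℝ h) p v (0, w) := by
  have hG : DifferentiableAt ℝ (uncurry (gradSnd h)) p :=
    (contDiff_uncurry_gradSnd hh (m := 1) le_rfl).differentiable one_ne_zero p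
  have hD : DifferentiableAt ℝ (fderiv ℝ h) p :=
    (hh.fderiv_right (m := 1) le_rfl).differentiable one_ne_zero p
  have hinner : (fun q => ⟪uncurry (gradSnd h) q, w⟫) = fun q => fderiv ℝ h q (0, w) := by
    rw [uncurry_gradSnd (hh.differentiable two_ne_zero)]
    exact funext fun q => inner_rieszSnd _ _
  have hL := hG.hasFDerivAt.inner ℝ (hasFDerivAt_const w p)
  rw [hinner] at hL
  simpa using congrArg (· v) (hL.unique (hD.hasFDerivAt.clm_apply (hasFDerivAt_const (0, w) p)))

theorem isSelfAdjoint_fderiv_gradSnd {h : E × F → ℝ} (hh : ContDiff ℝ 2 h) (x : E) (y : F) :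
    IsSelfAdjoint (fderiv ℝ (gradSnd h x) y) := by
  have hG := (contDiff_uncurry_gradSnd hh (m := 1) le_rfl).differentiable one_ne_zero (x, y)
  have hsymm := (hh.contDiffAt (x := (x, y))).isSymmSndFDerivAt (by simp)
  rw [ContinuousLinearMap.isSelfAdjoint_iff_isSymmetric]
  intro w w'
  simp only [coe_coe, hG.fderiv_partial_snd, coe_comp, comp_apply, inr_apply,
    inner_fderiv_uncurry_gradSnd hh, real_inner_comm _ w]
  exact hsymm _ _

noncomputable def implicitDeriv (g : E × F → ℝ) (x : E) (y : F) : E →L[ℝ] F :=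
  -(Ring.inverse (fderiv ℝ (gradSnd g x) y) ∘L fderiv ℝ (fun x' => gradSnd g x' y) x)

theorem hasFDerivAt_argmin [CompleteSpace E] {g : E × F → ℝ} {μ : ℝ} (hμ : 0 < μ)
    (hg : ContDiff ℝ 2 g) (hcoer : ∀ x y v, μ * ‖v‖ ^ 2 ≤ ⟪fderiv ℝ (gradSnd g x) y v, v⟫)
    {ystar : E → F} (hmin : ∀ x y, g (x, ystar x) ≤ g (x, y)) (x : E) :
    HasFDerivAt ystar (implicitDeriv g x (ystar x)) x := by
  have hG := contDiff_uncurry_gradSnd hg (m := 1) le_rfl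
  have hGd : Differentiable ℝ (uncurry (gradSnd g)) := hG.differentiable one_ne_zero
  have hA := (hGd (x, ystar x)).fderiv_partial_snd
  have hB := (hGd (x, ystar x)).fderiv_partial_fst
  have hzero : ∀ x, uncurry (gradSnd g) (x, ystar x) = 0 := fun x => by
    have hlocal : IsLocalMin (fun y => g (x, y)) (ystar x) := Filter.Eventually.of_forall (hmin x)
    simp [gradSnd, gradient, hlocal.fderiv_eq_zero]
  have hinj : ∀ x, Injective fun y => uncurry (gradSnd g) (x, y) := fun x =>
    injective_of_fderiv_coercive hμ (fun y => (hGd (x, y)).comp y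
      (hasFDerivAt_prodMk_right x y).differentiableAt) (hcoer x)
  have hinv := hA ▸ (isInvertible_of_coercive hμ (hcoer x (ystar x)))
  have := (hG.contDiffAt.hasStrictFDerivAt one_ne_zero).hasFDerivAt_of_apply_eq_zero hinv hzero hinj
  rwa [← hA, ← hB, ← ringInverse_eq_inverse] at this

end GradSnd

section Bilevel

variable {E F : Type*} [NormedAddCommGroup E] [InnerProductSpace ℝ E] [CompleteSpace E]
  [NormedAddCommGroup F] [InnerProductSpace ℝ F] [CompleteSpace F]

theorem fderiv_gradFst_eq_adjoint {h : E × F → ℝ} (hh : ContDiff ℝ 2 h) (x : E) (y : F) :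
    fderiv ℝ (gradFst h x) y = adjoint (fderiv ℝ (fun x' => gradSnd h x' y) x) := by
  have hGf := (contDiff_uncurry_gradFst hh (m := 1) le_rfl).differentiable one_ne_zero (x, y)
  have hGs := (contDiff_uncurry_gradSnd hh (m := 1) le_rfl).differentiable one_ne_zero (x, y)
  have hsymm := (hh.contDiffAt (x := (x, y))).isSymmSndFDerivAt (by simp)
  rw [eq_adjoint_iff]
  intro w u
  simp only [hGf.fderiv_partial_snd, hGs.fderiv_partial_fst, coe_comp, comp_apply, inl_apply,
    inr_apply, inner_fderiv_uncurry_gradFst hh, real_inner_comm _ w,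
    inner_fderiv_uncurry_gradSnd hh]
  exact hsymm _ _

theorem gradient_comp_graph {f : E × F → ℝ} {φ : E → F} {φ' : E →L[ℝ] F} {x : E}
    (hf : DifferentiableAt ℝ f (x, φ x)) (hφ : HasFDerivAt φ φ' x) :
    gradient (fun x' => f (x', φ x')) x = gradFst f x (φ x) + adjoint φ' (gradSnd f x (φ x)) := by
  refine ext_inner_right ℝ fun u => ?_
  have hchain : fderiv ℝ (fun x' => f (x', φ x')) x =
      fderiv ℝ (fun x' => f (x', φ x)) x + fderiv ℝ (fun y => f (x, y)) (φ x) ∘L φ' :=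
    hf.fderiv_comp_graph (h := curry f) hφ
  rw [inner_gradient_left, hchain, inner_add_left, adjoint_inner_left]
  simp [gradFst, gradSnd, inner_gradient_left]

noncomputable def hypergradient (f g : E × F → ℝ) (x : E) (y : F) : E :=
  gradFst f x y -
    fderiv ℝ (gradFst g x) y (Ring.inverse (fderiv ℝ (gradSnd g x) y) (gradSnd f x y))

theorem gradient_comp_eq_hypergradient {f g : E × F → ℝ} {ystar : E → F} {x : E}
    (hf : DifferentiableAt ℝ f (x, ystar x)) (hg : ContDiff ℝ 2 g)
    (hy : HasFDerivAt ystar (implicitDeriv g x (ystar x)) x) :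
    gradient (fun x' => f (x', ystar x')) x = hypergradient f g x (ystar x) := by
  rw [gradient_comp_graph hf hy, implicitDeriv, map_neg, adjoint_comp,
    ← fderiv_gradFst_eq_adjoint hg, ← star_eq_adjoint,
    (isSelfAdjoint_fderiv_gradSnd hg x _).ringInverse.star_eq, hypergradient]
  simp [sub_eq_add_neg]

theorem differentiable_uncurry_hypergradient {f g : E × F → ℝ} (hf : ContDiff ℝ 2 f)
    (hg : ContDiff ℝ 3 g) (hA : ∀ x y, IsUnit (fderiv ℝ (gradSnd g x) y)) :
    Differentiable ℝ (uncurry (hypergradient f g)) := by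
  have hfx := (contDiff_uncurry_gradFst hf (m := 1) le_rfl).differentiable one_ne_zero
  have hfy := (contDiff_uncurry_gradSnd hf (m := 1) le_rfl).differentiable one_ne_zero
  have hgxy := (contDiff_uncurry_gradFst hg (m := 2) le_rfl).differentiable_fderiv_partial_snd
  have hgyy := (contDiff_uncurry_gradSnd hg (m := 2) le_rfl).differentiable_fderiv_partial_snd
  exact fun p =>
    (hfx p).sub ((hgxy p).clm_apply (((hgyy p).inverse (hA p.1 p.2)).clm_apply (hfy p)))

end Bilevel

/-- For `f` twice and `g` three times continuously differentiable with
`∇²_{yy} g(x,y) ⪰ μ_g I` everywhere (`μ_g > 0`), the outer objective `Φ(x) = f(x, y*(x))`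
is twice differentiable, with Hessian (Jacobian of the gradient)
`∇²Φ(x) = ∇ₓ[∇̄ₓ f](x, y*(x)) + ∇_y[∇̄ₓ f](x, y*(x)) ∘ D y*(x)`,
where `D y*(x) = −[∇²_{yy} g(x, y*(x))]⁻¹ ∇²_{yx} g(x, y*(x))`. -/
theorem outer_objective_hessian
    {d₁ d₂ : ℕ}
    (f g : EuclideanSpace ℝ (Fin d₁) × EuclideanSpace ℝ (Fin d₂) → ℝ)
    (μg : ℝ) (hμg : 0 < μg)
    (hf_smooth : ContDiff ℝ 2 f)
    (hg_smooth : ContDiff ℝ 3 g)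
    -- the gradients of `f` in `x`, `f` in `y`, `g` in `x` and `g` in `y`
    (gradXf : EuclideanSpace ℝ (Fin d₁) → EuclideanSpace ℝ (Fin d₂) → EuclideanSpace ℝ (Fin d₁))
    (hgradXf : ∀ x y, gradXf x y = gradient (fun x' => f (x', y)) x)
    (gradYf : EuclideanSpace ℝ (Fin d₁) → EuclideanSpace ℝ (Fin d₂) → EuclideanSpace ℝ (Fin d₂))
    (hgradYf : ∀ x y, gradYf x y = gradient (fun y' => f (x, y')) y)
    (gradXg : EuclideanSpace ℝ (Fin d₁) → EuclideanSpace ℝ (Fin d₂) → EuclideanSpace ℝ (Fin d₁))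
    (hgradXg : ∀ x y, gradXg x y = gradient (fun x' => g (x', y)) x)
    (gradYg : EuclideanSpace ℝ (Fin d₁) → EuclideanSpace ℝ (Fin d₂) → EuclideanSpace ℝ (Fin d₂))
    (hgradYg : ∀ x y, gradYg x y = gradient (fun y' => g (x, y')) y)
    (hg_hess : ∀ x y (v : EuclideanSpace ℝ (Fin d₂)),
      μg * ‖v‖ ^ 2 ≤ ⟪fderiv ℝ (gradYg x) y v, v⟫)
    -- `y*` is the (unique) minimizer of `y ↦ g (x, y)` for every `x`
    (ystar : EuclideanSpace ℝ (Fin d₁) → EuclideanSpace ℝ (Fin d₂))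
    (hystar : ∀ x y, g (x, ystar x) ≤ g (x, y))
    -- the hypergradient `∇̄ₓ f`
    (barf : EuclideanSpace ℝ (Fin d₁) → EuclideanSpace ℝ (Fin d₂) → EuclideanSpace ℝ (Fin d₁))
    (hbarf : ∀ x y, barf x y =
      gradXf x y -
        (fderiv ℝ (fun y' => gradXg x y') y)
          ((Ring.inverse (fderiv ℝ (gradYg x) y)) (gradYf x y)))
    -- the Jacobian `D y*(x) = −[∇²_{yy} g(x, y*(x))]⁻¹ ∇²_{yx} g(x, y*(x))`
    (Dystar : ∀ x : EuclideanSpace ℝ (Fin d₁),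
      EuclideanSpace ℝ (Fin d₁) →L[ℝ] EuclideanSpace ℝ (Fin d₂))
    (hDystar : ∀ x, Dystar x =
      -(ContinuousLinearMap.comp
          (Ring.inverse (fderiv ℝ (gradYg x) (ystar x)))
          (fderiv ℝ (fun x' => gradYg x' (ystar x)) x)))
    -- the outer objective
    (Φ : EuclideanSpace ℝ (Fin d₁) → ℝ)
    (hΦ : ∀ x, Φ x = f (x, ystar x)) :
    Differentiable ℝ Φ ∧
    Differentiable ℝ (fun x => gradient Φ x) ∧
    ∀ x, fderiv ℝ (fun x' => gradient Φ x') x =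
      fderiv ℝ (fun x' => barf x' (ystar x)) x +
        (fderiv ℝ (fun y' => barf x y') (ystar x)).comp (Dystar x) := by
  obtain rfl : gradXf = gradFst f := funext₂ hgradXf
  obtain rfl : gradYf = gradSnd f := funext₂ hgradYf
  obtain rfl : gradXg = gradFst g := funext₂ hgradXg
  obtain rfl : gradYg = gradSnd g := funext₂ hgradYg
  obtain rfl : barf = hypergradient f g := funext₂ hbarf
  obtain rfl : Dystar = fun x => implicitDeriv g x (ystar x) := funext hDystar
  obtain rfl : Φ = fun x => f (x, ystar x) := funext hΦ
  have hf : Differentiable ℝ f := hf_smooth.differentiable two_ne_zero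
  have hg : ContDiff ℝ 2 g := hg_smooth.of_le (by norm_num)
  have hDy : ∀ x, HasFDerivAt ystar (implicitDeriv g x (ystar x)) x :=
    hasFDerivAt_argmin hμg hg hg_hess hystar
  have hgrad : gradient (fun x => f (x, ystar x)) = fun x => hypergradient f g x (ystar x) :=
    funext fun x => gradient_comp_eq_hypergradient (hf _) hg (hDy x)
  have hbar : Differentiable ℝ (uncurry (hypergradient f g)) :=
    differentiable_uncurry_hypergradient hf_smooth hg_smooth fun x y =>
      (isInvertible_of_coercive hμg (hg_hess x y)).isUnit
  have hgraph : ∀ x, DifferentiableAt ℝ (fun x' => (x', ystar x')) x := fun x =>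
    ((hasFDerivAt_id x).prodMk (hDy x)).differentiableAt
  refine ⟨fun x => (hf _).comp x (hgraph x), ?_, fun x => ?_⟩
  · rw [hgrad]
    exact fun x => (hbar _).comp x (hgraph x)
  · rw [hgrad]
    exact (hbar _).fderiv_comp_graph (hDy x)
end
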